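/- arXiv:2210.08639 — 4 statements merged into one kernel-verified Lean document; each statement's English description precedes it below -/
import Mathlib

section
/- Fan's inequality: for all real κ ≥ −1 and all λ ∈ [0, 1), exp(λκ + κ²(λ + log(1 − λ))) ≤ 1 + λκ. -/
/-!
With `a = -λ` and `b = λκ`, the exponent is `b + b ^ 2 * logQuot a` while
`log (1 + b) = b + b ^ 2 * logQuot b`, and `κ ≥ -1` means `a ≤ b`; so the inequality follows from the
monotonicity of `logQuot x = (log (1 + x) - x) / x ^ 2` on `(-1, ∞)`. Away from `0` this holds
because `x ^ 3 * logQuot' x = 2x - x ^ 2 / (1 + x) - 2 log (1 + x)` is increasing and vanishes at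
`0`; across `0` because `logQuot` stays below `-1/2` on the left and above it on the right.
-/

open Real Set

lemma monotoneOn_of_hasDerivAt_nonneg {D : Set ℝ} (hD : Convex ℝ D) {f f' : ℝ → ℝ}
    (hf : ∀ x ∈ D, HasDerivAt f (f' x) x) (hf' : ∀ x ∈ D, 0 ≤ f' x) : MonotoneOn f D :=
  monotoneOn_of_hasDerivWithinAt_nonneg hD (fun x hx => (hf x hx).continuousAt.continuousWithinAt)
    (fun x hx => (hf x (interior_subset hx)).hasDerivWithinAt)
    (fun x hx => hf' x (interior_subset hx))

lemma hasDerivAt_log_one_add {x : ℝ} (hx : -1 < x) :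
    HasDerivAt (fun y => log (1 + y)) (1 + x)⁻¹ x := by
  have := (hasDerivAt_log (by linarith : 1 + x ≠ 0)).comp x ((hasDerivAt_id x).const_add 1)
  exact this.congr_deriv (by simp)

lemma monotoneOn_log_one_add_sub_add_sq_div_two :
    MonotoneOn (fun x => log (1 + x) - x + x ^ 2 / 2) (Ioi (-1)) := by
  refine monotoneOn_of_hasDerivAt_nonneg (convex_Ioi _) (f' := fun x => x ^ 2 / (1 + x))
    (fun x hx => ?_) (fun x hx => div_nonneg (sq_nonneg x) (by linarith [mem_Ioi.1 hx]))
  have hx' : 1 + x ≠ 0 := by linarith [mem_Ioi.1 hx]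
  refine (((hasDerivAt_log_one_add hx).sub (hasDerivAt_id x)).add
    ((hasDerivAt_pow 2 x).div_const 2)).congr_deriv ?_
  field_simp
  ring

lemma log_one_add_le_sub_sq_div_two {x : ℝ} (hx : -1 < x) (hx0 : x ≤ 0) :
    log (1 + x) ≤ x - x ^ 2 / 2 := by
  have := monotoneOn_log_one_add_sub_add_sq_div_two hx (by norm_num : (-1 : ℝ) < 0) hx0
  norm_num at this
  linarith

lemma sub_sq_div_two_le_log_one_add {x : ℝ} (hx0 : 0 ≤ x) :
    x - x ^ 2 / 2 ≤ log (1 + x) := by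
  have := monotoneOn_log_one_add_sub_add_sq_div_two (by norm_num : (-1 : ℝ) < 0)
    (by linarith : (-1 : ℝ) < x) hx0
  norm_num at this
  linarith

noncomputable def logQuot (x : ℝ) : ℝ := (log (1 + x) - x) / x ^ 2

lemma log_one_add_eq_add_sq_mul_logQuot {x : ℝ} (hx : x ≠ 0) :
    log (1 + x) = x + x ^ 2 * logQuot x := by
  rw [logQuot, mul_div_cancel₀ _ (pow_ne_zero 2 hx)]
  ring

lemma logQuot_le_neg_half {x : ℝ} (hx : -1 < x) (hx0 : x < 0) : logQuot x ≤ -(1 / 2) := by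
  rw [logQuot, div_le_iff₀ (sq_pos_of_neg hx0)]
  linarith [log_one_add_le_sub_sq_div_two hx hx0.le]

lemma neg_half_le_logQuot {x : ℝ} (hx0 : 0 < x) : -(1 / 2) ≤ logQuot x := by
  rw [logQuot, le_div_iff₀ (by positivity)]
  linarith [sub_sq_div_two_le_log_one_add hx0.le]

lemma monotoneOn_two_mul_sub_sq_div_one_add_sub_two_mul_log_one_add :
    MonotoneOn (fun x => 2 * x - x ^ 2 / (1 + x) - 2 * log (1 + x)) (Ioi (-1)) := by
  refine monotoneOn_of_hasDerivAt_nonneg (convex_Ioi _) (f' := fun x => x ^ 2 / (1 + x) ^ 2)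
    (fun x hx => ?_) (fun x _ => by positivity)
  have hx' : 1 + x ≠ 0 := by linarith [mem_Ioi.1 hx]
  refine ((((hasDerivAt_id x).const_mul 2).sub
    ((hasDerivAt_pow 2 x).div ((hasDerivAt_id x).const_add 1) hx')).sub
    ((hasDerivAt_log_one_add hx).const_mul 2)).congr_deriv ?_
  simp only [id]
  field_simp
  ring

lemma hasDerivAt_logQuot {x : ℝ} (hx : -1 < x) (hx0 : x ≠ 0) :
    HasDerivAt logQuot ((2 * x - x ^ 2 / (1 + x) - 2 * log (1 + x)) / x ^ 3) x := by
  have hx' : 1 + x ≠ 0 := by linarith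
  refine (((hasDerivAt_log_one_add hx).sub (hasDerivAt_id x)).div (hasDerivAt_pow 2 x)
    (pow_ne_zero 2 hx0)).congr_deriv ?_
  simp only [Pi.sub_apply, id]
  field_simp
  ring

lemma monotoneOn_logQuot_Ioo : MonotoneOn logQuot (Ioo (-1) 0) := by
  refine monotoneOn_of_hasDerivAt_nonneg (convex_Ioo _ _)
    (fun x hx => hasDerivAt_logQuot hx.1 hx.2.ne) (fun x hx => div_nonneg_of_nonpos ?_ ?_)
  · simpa using monotoneOn_two_mul_sub_sq_div_one_add_sub_two_mul_log_one_add hx.1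
      (by norm_num : (-1 : ℝ) < 0) hx.2.le
  · exact (Odd.pow_neg (by decide) hx.2).le

lemma monotoneOn_logQuot_Ioi : MonotoneOn logQuot (Ioi 0) := by
  refine monotoneOn_of_hasDerivAt_nonneg (convex_Ioi _)
    (fun x (hx : 0 < x) => hasDerivAt_logQuot (by linarith) hx.ne')
    (fun x (hx : 0 < x) => div_nonneg ?_ (pow_pos hx 3).le)
  simpa using monotoneOn_two_mul_sub_sq_div_one_add_sub_two_mul_log_one_add
    (by norm_num : (-1 : ℝ) < 0) (mem_Ioi.2 (by linarith)) hx.le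

lemma monotoneOn_logQuot : MonotoneOn logQuot (Ioi (-1) \ {0}) := by
  rintro a ⟨ha, ha0⟩ b ⟨hb, hb0⟩ hab
  rcases lt_or_gt_of_ne ha0 with ha0 | ha0 <;> rcases lt_or_gt_of_ne hb0 with hb0 | hb0
  · exact monotoneOn_logQuot_Ioo ⟨ha, ha0⟩ ⟨hb, hb0⟩ hab
  · exact (logQuot_le_neg_half ha ha0).trans (neg_half_le_logQuot hb0)
  · linarith
  · exact monotoneOn_logQuot_Ioi ha0 hb0 hab

/-- **Fan's inequality.** For all real `κ ≥ −1` and all `λ ∈ [0, 1)`,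
`exp(λκ + κ²(λ + log(1 − λ))) ≤ 1 + λκ`. -/
theorem fan_inequality (κ l : ℝ) (hκ : -1 ≤ κ) (hl0 : 0 ≤ l) (hl1 : l < 1) :
    Real.exp (l * κ + κ ^ 2 * (l + Real.log (1 - l))) ≤ 1 + l * κ := by
  rcases hl0.eq_or_lt with rfl | hl
  · simp
  rcases eq_or_ne κ 0 with rfl | hκ0
  · simp
  have hlκ : -l ≤ l * κ := by nlinarith
  have hquot : logQuot (-l) ≤ logQuot (l * κ) :=
    monotoneOn_logQuot ⟨mem_Ioi.2 (by linarith), by simpa using hl.ne'⟩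
      ⟨mem_Ioi.2 (by linarith), by simpa using mul_ne_zero hl.ne' hκ0⟩ hlκ
  have hexp : l * κ + κ ^ 2 * (l + log (1 - l)) ≤ log (1 + l * κ) := by
    rw [log_one_add_eq_add_sq_mul_logQuot (mul_ne_zero hl.ne' hκ0), sub_eq_add_neg,
      log_one_add_eq_add_sq_mul_logQuot (neg_ne_zero.2 hl.ne')]
    linear_combination mul_le_mul_of_nonneg_left hquot (sq_nonneg (l * κ))
  calc exp (l * κ + κ ^ 2 * (l + log (1 - l))) ≤ exp (log (1 + l * κ)) := exp_le_exp.2 hexp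
    _ = 1 + l * κ := exp_log (by nlinarith)
end

section
/- If in the design-based setting the IPW estimates satisfy |τ̂_i| ≤ m almost surely for all i, for a constant m > 0, and τ_i := E(τ̂_i | F_{i-1}), then the process M_n = exp( (Σ_{i=1}^n (τ̂_i − τ_i))/(m(m+1)) + (Σ_{i=1}^n τ̂_i²)/m² · (log(m/(m+1)) + 1/(m+1)) ), with M_0 = 1, is a nonnegative supermartingale with respect to (F_n). -/
/-!
Write `k = m (m + 1)`. By the inequality of Fan, Grama and Liu, `exp (v + c v²) ≤ 1 + v` for
`v ≥ -l`, where `0 < l < 1` and `c = (log (1 - l) + l) / l²`. With `l = 1 / (m + 1)` and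
`v = τ̂ᵢ / k` it bounds the factor `M_i / M_{i-1}` by `(1 + τ̂ᵢ / k) exp (-τᵢ / k)`, whose
conditional expectation given `F_{i-1}` is `(1 + t) exp (-t) ≤ 1` with `t = τᵢ / k`.
The inequality says `c ≤ (log (1 + v) - v) / v²`: for `v < 0` this is the monotonicity read off
the power series `-(log (1 - s) + s) / s² = ∑ sⁿ / (n + 2)`, and for `v ≥ 0` it follows from
`c ≤ -1/2`.
-/

open MeasureTheory ProbabilityTheory Filter Real

namespace Real

theorem hasSum_pow_div_add_two {s : ℝ} (hs0 : s ≠ 0) (hs : |s| < 1) :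
    HasSum (fun n : ℕ => s ^ n / (n + 2)) (-(log (1 - s) + s) / s ^ 2) := by
  have h := ((hasSum_nat_add_iff' 1).2 (hasSum_pow_div_log_of_abs_lt_one hs)).div_const (s ^ 2)
  convert h using 1
  · rfl
  · ext n; push_cast; field_simp; ring
  · norm_num; ring

theorem log_one_sub_add_div_sq_le_of_le {s l : ℝ} (hs : 0 < s) (hsl : s ≤ l) (hl : l < 1) :
    (log (1 - l) + l) / l ^ 2 ≤ (log (1 - s) + s) / s ^ 2 := by
  have h := hasSum_le (fun n => by gcongr)
    (hasSum_pow_div_add_two hs.ne' (abs_lt.2 ⟨by linarith, hsl.trans_lt hl⟩))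
    (hasSum_pow_div_add_two (hs.trans_le hsl).ne' (abs_lt.2 ⟨by linarith, hl⟩))
  rw [neg_div, neg_div] at h
  linarith

theorem log_one_sub_add_div_sq_le {l : ℝ} (hl0 : 0 < l) (hl1 : l < 1) :
    (log (1 - l) + l) / l ^ 2 ≤ -1 / 2 := by
  have h := le_hasSum (hasSum_pow_div_add_two hl0.ne' (abs_lt.2 ⟨by linarith, hl1⟩)) 0
    (fun n _ => by positivity)
  norm_num at h
  rw [show -l + -log (1 - l) = -(log (1 - l) + l) by ring, neg_div] at h
  linarith

theorem neg_sq_div_two_le_log_one_add_sub {v : ℝ} (hv : 0 ≤ v) :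
    -(v ^ 2 / 2) ≤ log (1 + v) - v := by
  have hlog := le_log_one_add_of_nonneg hv
  have hgap : 2 * v / (v + 2) - v + v ^ 2 / 2 = v ^ 3 / (2 * (v + 2)) := by field_simp; ring
  have : 0 ≤ v ^ 3 / (2 * (v + 2)) := by positivity
  linarith

theorem exp_add_mul_sq_le_one_add {l v : ℝ} (hl0 : 0 < l) (hl1 : l < 1) (hv : -l ≤ v) :
    exp (v + (log (1 - l) + l) / l ^ 2 * v ^ 2) ≤ 1 + v := by
  rw [← exp_log (by linarith : 0 < 1 + v), exp_le_exp]
  suffices (log (1 - l) + l) / l ^ 2 * v ^ 2 ≤ log (1 + v) - v by linarith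
  rcases le_or_gt 0 v with hv0 | hv0
  · nlinarith [log_one_sub_add_div_sq_le hl0 hl1, neg_sq_div_two_le_log_one_add_sub hv0]
  · have h := log_one_sub_add_div_sq_le_of_le (neg_pos.2 hv0) (by linarith) hl1
    rw [le_div_iff₀ (pow_pos (neg_pos.2 hv0) 2), neg_sq] at h
    simpa [sub_eq_add_neg] using h

end Real

/-- With `l = 1 / (m + 1)` and `v = x / (m (m + 1))` this is `v + (log (1 - l) + l) / l² * v²`. -/
noncomputable def incrementExponent (m x : ℝ) : ℝ :=
  x / (m * (m + 1)) + x ^ 2 / m ^ 2 * (log (m / (m + 1)) + 1 / (m + 1))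

theorem exp_incrementExponent_le {m x : ℝ} (hm : 0 < m) (hx : |x| ≤ m) :
    exp (incrementExponent m x) ≤ 1 + x / (m * (m + 1)) := by
  have hl0 : (0 : ℝ) < 1 / (m + 1) := by positivity
  have hl1 : 1 / (m + 1) < 1 := by rw [div_lt_one (by linarith)]; linarith
  have hv : -(1 / (m + 1)) ≤ x / (m * (m + 1)) := by
    rw [neg_le, ← neg_div, div_le_div_iff₀ (by positivity) (by positivity)]
    nlinarith [neg_abs_le x]
  convert exp_add_mul_sq_le_one_add hl0 hl1 hv using 3
  rw [incrementExponent, show 1 - 1 / (m + 1) = m / (m + 1) by field_simp; ring]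
  field_simp

theorem incrementExponent_le {m x : ℝ} (hm : 0 < m) (hx : |x| ≤ m) :
    incrementExponent m x ≤ x / (m * (m + 1)) := by
  rw [← exp_le_exp]
  linarith [exp_incrementExponent_le hm hx, add_one_le_exp (x / (m * (m + 1)))]

theorem incrementExponent_sub_div_le {m x y : ℝ} (hm : 0 < m) (hx : |x| ≤ m) (hy : |y| ≤ m) :
    incrementExponent m x - y / (m * (m + 1)) ≤ 2 * m / (m * (m + 1)) := by
  have hxy : x - y ≤ 2 * m := by linarith [(abs_le.1 hx).2, neg_le_of_abs_le hy]
  calc incrementExponent m x - y / (m * (m + 1))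
      ≤ x / (m * (m + 1)) - y / (m * (m + 1)) := by linarith [incrementExponent_le hm hx]
    _ = (x - y) / (m * (m + 1)) := by ring
    _ ≤ 2 * m / (m * (m + 1)) := by gcongr

namespace MeasureTheory

variable {Ω : Type*} {𝒢 m0 : MeasurableSpace Ω} {μ : Measure Ω}

theorem condExp_div_const (f : Ω → ℝ) (c : ℝ) :
    μ[fun ω => f ω / c | 𝒢] =ᵐ[μ] fun ω => μ[f | 𝒢] ω / c := by
  have hsmul : (fun ω => f ω / c) = c⁻¹ • f := by ext ω; simp [div_eq_inv_mul]
  filter_upwards [condExp_smul (μ := μ) c⁻¹ f 𝒢] with ω hω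
  rw [hsmul, hω, Pi.smul_apply, smul_eq_mul, div_eq_inv_mul]

theorem integrable_exp_of_ae_le [IsFiniteMeasure μ] {f : Ω → ℝ} {C : ℝ}
    (hf : AEStronglyMeasurable f μ) (hfC : ∀ᵐ ω ∂μ, f ω ≤ C) :
    Integrable (fun ω => exp (f ω)) μ := by
  refine (integrable_const (exp C)).mono' (continuous_exp.comp_aestronglyMeasurable hf) ?_
  filter_upwards [hfC] with ω hω
  rw [norm_of_nonneg (exp_pos _).le]
  exact exp_le_exp.2 hω

theorem condExp_exp_sub_le_one [IsFiniteMeasure μ] (h𝒢 : 𝒢 ≤ m0) {f X V : Ω → ℝ}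
    (hV : StronglyMeasurable[𝒢] V) (hX : Integrable X μ) (hXV : V =ᵐ[μ] μ[X | 𝒢])
    (hf : AEStronglyMeasurable f μ) (hfX : ∀ᵐ ω ∂μ, exp (f ω) ≤ 1 + X ω)
    (hexp : Integrable (fun ω => exp (f ω - V ω)) μ) :
    μ[fun ω => exp (f ω - V ω) | 𝒢] ≤ᵐ[μ] 1 := by
  have hexpf : Integrable (fun ω => exp (f ω)) μ := by
    refine ((integrable_const 1).add hX).mono' (continuous_exp.comp_aestronglyMeasurable hf) ?_
    filter_upwards [hfX] with ω hω
    rwa [norm_of_nonneg (exp_pos _).le]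
  have hsplit : (fun ω => exp (f ω - V ω)) = (fun ω => exp (-V ω)) * fun ω => exp (f ω) := by
    ext ω; simp [sub_eq_neg_add, exp_add]
  rw [hsplit] at hexp ⊢
  have hpull := condExp_mul_of_stronglyMeasurable_left
    (continuous_exp.comp_stronglyMeasurable hV.neg) hexp hexpf
  have hmono := condExp_mono (m := 𝒢) hexpf ((integrable_const 1).add hX) hfX
  have hadd := condExp_add (integrable_const (1 : ℝ)) hX 𝒢
  rw [condExp_const h𝒢] at hadd
  filter_upwards [hpull, hmono, hadd, hXV] with ω hpull hmono hadd hXV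
  simp only [Pi.mul_apply, Pi.add_apply, Pi.one_apply] at hpull hmono hadd ⊢
  calc μ[(fun ω => exp (-V ω)) * fun ω => exp (f ω) | 𝒢] ω
      = exp (-V ω) * μ[fun ω => exp (f ω) | 𝒢] ω := hpull
    _ ≤ exp (-V ω) * (1 + V ω) := by
        gcongr
        rw [hXV, ← hadd]
        exact hmono
    _ ≤ exp (-V ω) * exp (V ω) := by gcongr; linarith [add_one_le_exp (V ω)]
    _ = 1 := by rw [← exp_add, neg_add_cancel, exp_zero]

theorem condExp_exp_incrementExponent_sub_le_one [IsFiniteMeasure μ] (h𝒢 : 𝒢 ≤ m0)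
    {m : ℝ} (hm : 0 < m) {X V : Ω → ℝ} (hX : Integrable X μ) (hXbdd : ∀ᵐ ω ∂μ, |X ω| ≤ m)
    (hV : StronglyMeasurable[𝒢] V) (hVbdd : ∀ᵐ ω ∂μ, |V ω| ≤ m)
    (hXV : V =ᵐ[μ] μ[X | 𝒢]) :
    μ[fun ω => exp (incrementExponent m (X ω) - V ω / (m * (m + 1))) | 𝒢] ≤ᵐ[μ] 1 := by
  have hX0 := hX.aestronglyMeasurable
  have hV0 := hV.mono h𝒢
  refine condExp_exp_sub_le_one h𝒢 (X := fun ω => X ω / (m * (m + 1))) (by fun_prop)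
    (hX.div_const _) ?_ (by unfold incrementExponent; fun_prop) ?_ ?_
  · filter_upwards [hXV, condExp_div_const (μ := μ) (𝒢 := 𝒢) X (m * (m + 1))] with ω h1 h2
    rw [h2, h1]
  · filter_upwards [hXbdd] with ω h using exp_incrementExponent_le hm h
  · refine integrable_exp_of_ae_le (C := 2 * m / (m * (m + 1)))
      (by unfold incrementExponent; fun_prop) ?_
    filter_upwards [hXbdd, hVbdd] with ω hx hv using incrementExponent_sub_div_le hm hx hv

end MeasureTheory

namespace ProbabilityTheory

variable {Ω : Type*} {m0 : MeasurableSpace Ω} {μ : Measure Ω}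

theorem supermartingale_exp_sum_Icc [IsFiniteMeasure μ] {ℱ : Filtration ℕ m0}
    {Y : ℕ → Ω → ℝ} (hY : ∀ i, 1 ≤ i → StronglyMeasurable[ℱ i] (Y i))
    (hbdd : ∀ i, 1 ≤ i → ∃ C, ∀ᵐ ω ∂μ, Y i ω ≤ C)
    (hcond : ∀ n, μ[fun ω => exp (Y (n + 1) ω) | ℱ n] ≤ᵐ[μ] 1) :
    Supermartingale (fun n ω => exp (∑ i ∈ Finset.Icc 1 n, Y i ω)) ℱ μ := by
  have hsum (n : ℕ) : StronglyMeasurable[ℱ n] fun ω => ∑ i ∈ Finset.Icc 1 n, Y i ω :=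
    Finset.stronglyMeasurable_fun_sum _ fun i hi =>
      (hY i (Finset.mem_Icc.1 hi).1).mono (ℱ.mono (Finset.mem_Icc.1 hi).2)
  have hexp_succ (n : ℕ) : (fun ω => exp (∑ i ∈ Finset.Icc 1 (n + 1), Y i ω)) =
      (fun ω => exp (∑ i ∈ Finset.Icc 1 n, Y i ω)) * fun ω => exp (Y (n + 1) ω) := by
    ext ω
    rw [Finset.sum_Icc_succ_top (by omega), exp_add, Pi.mul_apply]
  have hexpY (n : ℕ) : Integrable (fun ω => exp (Y (n + 1) ω)) μ := by
    obtain ⟨C, hC⟩ := hbdd (n + 1) le_add_self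
    exact integrable_exp_of_ae_le ((hY (n + 1) le_add_self).mono (ℱ.le _)).aestronglyMeasurable hC
  have hint (n : ℕ) : Integrable (fun ω => exp (∑ i ∈ Finset.Icc 1 n, Y i ω)) μ := by
    induction n with
    | zero => simp
    | succ n ih =>
      obtain ⟨C, hC⟩ := hbdd (n + 1) le_add_self
      rw [hexp_succ]
      refine ih.mul_bdd (c := exp C) (continuous_exp.comp_stronglyMeasurable
        ((hY (n + 1) le_add_self).mono (ℱ.le _))).aestronglyMeasurable ?_
      filter_upwards [hC] with ω hω
      rw [norm_of_nonneg (exp_pos _).le]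
      exact exp_le_exp.2 hω
  refine supermartingale_nat (fun n => continuous_exp.comp_stronglyMeasurable (hsum n)) hint
    fun n => ?_
  rw [hexp_succ]
  filter_upwards [condExp_mul_of_stronglyMeasurable_left
    (continuous_exp.comp_stronglyMeasurable (hsum n)) (hexp_succ n ▸ hint (n + 1)) (hexpY n),
    hcond n] with ω hpull hle
  rw [hpull, Pi.mul_apply]
  exact mul_le_of_le_one_right (exp_pos _).le hle

end ProbabilityTheory

/-- If in the design-based setting the IPW estimates satisfy
`|τ̂_i| ≤ m` a.s. for all `i`, for a constant `m > 0`, and `τ_i := E(τ̂_i | F_{i-1})`,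
then `M_n = exp((Σ_{i=1}^n (τ̂_i − τ_i))/(m(m+1)) + (Σ_{i=1}^n τ̂_i²)/m² ·
(log(m/(m+1)) + 1/(m+1)))`, with `M_0 = 1`, is a nonnegative supermartingale w.r.t.
`(F_n)`. -/
theorem exp_process_supermartingale
    {Ω : Type*} {m0 : MeasurableSpace Ω} {μ : Measure Ω} [IsProbabilityMeasure μ]
    (ℱ : Filtration ℕ m0)
    (τhat τ : ℕ → Ω → ℝ) (m : ℝ) (hm : 0 < m)
    -- `(τ̂_i)` is `(F_i)`-adapted and a.s. bounded by `m`
    (hadapted : ∀ i, StronglyMeasurable[ℱ i] (τhat i))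
    (hbdd : ∀ i, ∀ᵐ ω ∂μ, |τhat i ω| ≤ m)
    (hint : ∀ i, Integrable (τhat i) μ)
    -- `τ_i = E(τ̂_i | F_{i-1})`
    (hτmeas : ∀ i, 1 ≤ i → StronglyMeasurable[ℱ (i - 1)] (τ i))
    (hτ : ∀ i, 1 ≤ i → τ i =ᵐ[μ] μ[τhat i | ℱ (i - 1)]) :
    Supermartingale
      (fun n ω => Real.exp
        ((∑ i ∈ Finset.Icc 1 n, (τhat i ω - τ i ω)) / (m * (m + 1)) +
          (∑ i ∈ Finset.Icc 1 n, (τhat i ω) ^ 2) / m ^ 2 *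
            (Real.log (m / (m + 1)) + 1 / (m + 1))))
      ℱ μ ∧
    (∀ n ω, 0 ≤ Real.exp
        ((∑ i ∈ Finset.Icc 1 n, (τhat i ω - τ i ω)) / (m * (m + 1)) +
          (∑ i ∈ Finset.Icc 1 n, (τhat i ω) ^ 2) / m ^ 2 *
            (Real.log (m / (m + 1)) + 1 / (m + 1)))) ∧
    (∀ ω : Ω, Real.exp
        ((∑ i ∈ Finset.Icc 1 0, (τhat i ω - τ i ω)) / (m * (m + 1)) +
          (∑ i ∈ Finset.Icc 1 0, (τhat i ω) ^ 2) / m ^ 2 *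
            (Real.log (m / (m + 1)) + 1 / (m + 1))) = 1) := by
  have hτbdd (i : ℕ) (hi : 1 ≤ i) : ∀ᵐ ω ∂μ, |τ i ω| ≤ m := by
    filter_upwards [hτ i hi, ae_bdd_abs_condExp_of_ae_bdd_abs (m := ℱ (i - 1)) (hbdd i)]
      with ω hω hbd
    rwa [hω]
  refine ⟨?_, fun _ _ => (exp_pos _).le, fun _ => by simp⟩
  simp only [Finset.sum_div, Finset.sum_mul, ← Finset.sum_add_distrib, sub_div,
    sub_add_eq_add_sub]
  refine supermartingale_exp_sum_Icc
    (Y := fun i ω => incrementExponent m (τhat i ω) - τ i ω / (m * (m + 1)))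
    (fun i hi => ?_) (fun i hi => ⟨2 * m / (m * (m + 1)), ?_⟩) fun n => ?_
  · have := (hτmeas i hi).mono (ℱ.mono (Nat.sub_le i 1))
    have := hadapted i
    unfold incrementExponent
    fun_prop
  · filter_upwards [hbdd i, hτbdd i hi] with ω h h' using incrementExponent_sub_div_le hm h h'
  · exact condExp_exp_incrementExponent_sub_le_one (ℱ.le n) hm
      (hint _) (hbdd _) (hτmeas (n + 1) le_add_self) (hτbdd _ le_add_self)
      (hτ (n + 1) le_add_self)
end

section
/- One-sided exact design-based bound: if in the design-based setting |τ̂_i| ≤ m almost surely for all i, with constant m > 0, τ_i := E(τ̂_i | F_{i-1}), and S_n := Σ_{i=1}^n τ̂_i², then for any α̃ ∈ (0,1), P( ∃ n ≥ 1 : Σ_{i=1}^n (τ̂_i − τ_i) ≥ m(m+1)·log(1/α̃) + S_n·( ((m+1)/m)·log(1 + 1/m) − 1/m ) ) ≤ α̃. -/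
/-!
For `0 < l < 1` and `x ≥ -1` one has `exp (l x - ψ(l) x²) ≤ 1 + l x` with `ψ(l) = -log (1 - l) - l`,
because `(y - log (1 + y)) / y²` is decreasing on `(-1, ∞)`. Applied to `x = τ̂ᵢ / m` and combined
with `E(τ̂ᵢ | Fᵢ₋₁) = τᵢ` and `1 + y ≤ eʸ`, this makes
`exp ((l / m) Σᵢ (τ̂ᵢ - τᵢ) - (ψ(l) / m²) Sₙ)` a nonnegative supermartingale started at `1`.
By Ville's inequality it exceeds `1 / α̃` with probability at most `α̃`, and for `l = 1 / (m + 1)`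
that event is the one in the statement.
-/

open MeasureTheory ProbabilityTheory Filter Real Set

theorem min_le_of_hasDerivAt_of_sign {g g' : ℝ → ℝ} {a t₀ b u : ℝ} (hat₀ : a ≤ t₀) (ht₀b : t₀ ≤ b)
    (hg : ∀ t, a ≤ t → HasDerivAt g (g' t) t) (h_up_left : ∀ t ∈ Ioo a t₀, 0 ≤ g' t)
    (h_down : ∀ t ∈ Ioo t₀ b, g' t ≤ 0) (h_up_right : ∀ t ∈ Ioi b, 0 ≤ g' t) (hu : a ≤ u) :
    min (g a) (g b) ≤ g u := by
  have hcont : ∀ s ⊆ Ici a, ContinuousOn g s := fun s hs t ht =>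
    (hg t (hs ht)).continuousAt.continuousWithinAt
  have hderiv : ∀ s ⊆ Ici a, ∀ t ∈ interior s, HasDerivWithinAt g (g' t) (interior s) t :=
    fun s hs t ht => (hg t (hs (interior_subset ht))).hasDerivWithinAt
  rcases le_total u t₀ with hut₀ | ht₀u
  · have hmono := monotoneOn_of_hasDerivWithinAt_nonneg (convex_Icc a t₀)
      (hcont _ Icc_subset_Ici_self) (hderiv _ Icc_subset_Ici_self) (by rwa [interior_Icc])
    exact min_le_left _ _ |>.trans (hmono ⟨le_rfl, hat₀⟩ ⟨hu, hut₀⟩ hu)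
  rcases le_total u b with hub | hbu
  · have hanti := antitoneOn_of_hasDerivWithinAt_nonpos (convex_Icc t₀ b)
      (hcont _ fun t ht => hat₀.trans ht.1) (hderiv _ fun t ht => hat₀.trans ht.1)
      (by rwa [interior_Icc])
    exact min_le_right _ _ |>.trans (hanti ⟨ht₀u, hub⟩ ⟨ht₀b, le_rfl⟩ hub)
  · have hmono := monotoneOn_of_hasDerivWithinAt_nonneg (convex_Ici b)
      (hcont _ fun t ht => (hat₀.trans ht₀b).trans ht)
      (hderiv _ fun t ht => (hat₀.trans ht₀b).trans ht) (by rwa [interior_Ici])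
    exact min_le_right _ _ |>.trans (hmono self_mem_Ici hbu hbu)

theorem sub_log_one_add_le_mul_sq {a u : ℝ} (ha : -1 < a) (ha0 : a < 0) (hu : a ≤ u) :
    u - log (1 + u) ≤ (a - log (1 + a)) / a ^ 2 * u ^ 2 := by
  set c := (a - log (1 + a)) / a ^ 2 with hc_def
  have hca : c * a ^ 2 = a - log (1 + a) := by rw [hc_def]; field_simp [ha0.ne]
  clear_value c
  set g : ℝ → ℝ := fun t => log (1 + t) - t + c * t ^ 2 with hg_def
  set g' : ℝ → ℝ := fun t => t * (2 * c * (1 + t) - 1) / (1 + t)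
  have hga : g a = 0 := by simp only [hg_def, hca]; ring
  have hg0 : g 0 = 0 := by simp [hg_def]
  have hg : ∀ t, -1 < t → HasDerivAt g (g' t) t := fun t ht =>
    ((((hasDerivAt_id t).const_add 1).log (by simp; linarith)).sub (hasDerivAt_id t)).add
      (((hasDerivAt_id t).pow 2).const_mul c) |>.congr_deriv (by
        have : 1 + t ≠ 0 := by linarith
        simp only [g', id]; field_simp; ring)
  -- Rolle's theorem locates the second critical point `t₀` of `g`, between `a` and `0`.
  obtain ⟨t₀, ⟨hat₀, ht₀0⟩, hg't₀⟩ := exists_hasDerivAt_eq_zero ha0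
    (fun t ht => (hg t (by linarith [ht.1])).continuousAt.continuousWithinAt)
    (hga.trans hg0.symm) fun t ht => hg t (by linarith [ht.1])
  have hct₀ : 2 * c * (1 + t₀) = 1 := by
    simp only [g', div_eq_zero_iff, mul_eq_zero, ht₀0.ne, false_or] at hg't₀
    rcases hg't₀ with h | h <;> linarith
  have hc : 0 < c := by nlinarith
  have hsign : ∀ t, 2 * c * (1 + t) - 1 = 2 * c * (t - t₀) := fun t => by linear_combination hct₀
  have hgu := min_le_of_hasDerivAt_of_sign hat₀.le ht₀0.le (fun t ht => hg t (by linarith))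
    (fun t ⟨hat, htt₀⟩ => div_nonneg (mul_nonneg_of_nonpos_of_nonpos (by linarith)
      (by rw [hsign]; nlinarith)) (by linarith))
    (fun t ⟨ht₀t, ht0⟩ => div_nonpos_of_nonpos_of_nonneg (mul_nonpos_of_nonpos_of_nonneg ht0.le
      (by rw [hsign]; nlinarith)) (by linarith))
    (fun t (ht : 0 < t) => div_nonneg (mul_nonneg ht.le (by rw [hsign]; nlinarith)) (by linarith))
    hu
  rw [hga, hg0, min_self] at hgu
  simp only [hg_def] at hgu
  linarith

theorem exp_mul_sub_mul_sq_le_one_add_mul {l x : ℝ} (hl0 : 0 < l) (hl1 : l < 1) (hx : -1 ≤ x) :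
    exp (l * x - (-log (1 - l) - l) * x ^ 2) ≤ 1 + l * x := by
  have h := sub_log_one_add_le_mul_sq (a := -l) (u := l * x) (by linarith) (by linarith)
    (by nlinarith)
  have hpos : 0 < 1 + l * x := by nlinarith
  rw [← exp_log hpos, exp_le_exp]
  field_simp at h
  rw [← sub_eq_add_neg] at h
  linarith

theorem le_of_design_threshold_le {m L S T : ℝ} (hm : 0 < m)
    (h : m * (m + 1) * L + S * ((m + 1) / m * log (1 + 1 / m) - 1 / m) ≤ T) :
    L ≤ 1 / (m + 1) / m * T - (-log (1 - 1 / (m + 1)) - 1 / (m + 1)) / m ^ 2 * S := by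
  have hlog : log (1 - 1 / (m + 1)) = -log (1 + 1 / m) := by
    rw [← log_inv]; congr 1; field_simp; ring
  rw [hlog]
  field_simp
  field_simp at h
  linarith

namespace MeasureTheory

variable {Ω : Type*} {m0 : MeasurableSpace Ω} {μ : Measure Ω} [IsFiniteMeasure μ]

theorem condExp_exp_mul_sub_mul_sq_le {m : MeasurableSpace Ω} (hm : m ≤ m0) {X : Ω → ℝ}
    (hX : Integrable X μ) {b : ℝ} (hb : 0 < b) (hX_ge : ∀ᵐ ω ∂μ, -b ≤ X ω) {l : ℝ} (hl0 : 0 < l)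
    (hl1 : l < 1) :
    μ[fun ω => exp (l / b * X ω - (-log (1 - l) - l) / b ^ 2 * X ω ^ 2) | m]
      ≤ᵐ[μ] fun ω => exp (l / b * μ[X | m] ω) := by
  have hpt : ∀ᵐ ω ∂μ,
      exp (l / b * X ω - (-log (1 - l) - l) / b ^ 2 * X ω ^ 2) ≤ 1 + l / b * X ω := by
    filter_upwards [hX_ge] with ω hω
    have h := exp_mul_sub_mul_sq_le_one_add_mul hl0 hl1 (x := X ω / b)
      (by rw [le_div_iff₀ hb]; linarith)
    convert h using 2 <;> field_simp
  have hlin : Integrable (fun ω => 1 + l / b * X ω) μ := (integrable_const 1).add (hX.const_mul _)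
  have hexp : Integrable (fun ω => exp (l / b * X ω - (-log (1 - l) - l) / b ^ 2 * X ω ^ 2)) μ :=
    hlin.mono' (continuous_exp.comp_aestronglyMeasurable
      ((hX.aestronglyMeasurable.const_mul _).sub ((hX.aestronglyMeasurable.pow 2).const_mul _)))
      (by filter_upwards [hpt] with ω h; rwa [norm_of_nonneg (exp_pos _).le])
  have hcond_lin : μ[fun ω => 1 + l / b * X ω | m] =ᵐ[μ] fun ω => 1 + l / b * μ[X | m] ω := by
    filter_upwards [condExp_add (integrable_const (1 : ℝ)) (hX.const_mul (l / b)) m,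
      condExp_smul (l / b) X m] with ω h1 h2
    rw [show (fun ω => 1 + l / b * X ω) = (fun _ => (1 : ℝ)) + fun ω => l / b * X ω from rfl, h1,
      Pi.add_apply, condExp_const hm]
    exact congrArg (1 + ·) h2
  filter_upwards [condExp_mono hexp hlin hpt, hcond_lin] with ω h1 h2
  rw [h2] at h1
  linarith [add_one_le_exp (l / b * μ[X | m] ω)]

variable {ℱ : Filtration ℕ m0}

theorem supermartingale_exp_sum_sub {A B : ℕ → Ω → ℝ}
    (hA : ∀ n, StronglyMeasurable[ℱ (n + 1)] (A (n + 1)))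
    (hB : ∀ n, StronglyMeasurable[ℱ n] (B (n + 1)))
    (hA_le : ∀ n, ∃ C, ∀ᵐ ω ∂μ, A (n + 1) ω ≤ C)
    (hB_ge : ∀ n, ∃ C, ∀ᵐ ω ∂μ, C ≤ B (n + 1) ω)
    (hAB : ∀ n, μ[fun ω => exp (A (n + 1) ω) | ℱ n] ≤ᵐ[μ] fun ω => exp (B (n + 1) ω)) :
    Supermartingale (fun n ω => exp (∑ i ∈ Finset.Icc 1 n, (A i ω - B i ω))) ℱ μ := by
  set M : ℕ → Ω → ℝ := fun n ω => exp (∑ i ∈ Finset.Icc 1 n, (A i ω - B i ω))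
  have hM_zero : M 0 = 1 := by ext; simp [M]
  have hM_succ : ∀ n,
      M (n + 1) = (M n * fun ω => exp (-B (n + 1) ω)) * fun ω => exp (A (n + 1) ω) := by
    intro n; ext ω
    simp only [M, Pi.mul_apply, Finset.sum_Icc_succ_top (Nat.le_add_left 1 n), ← exp_add]
    congr 1; ring
  have hexpA_meas : ∀ n, StronglyMeasurable[ℱ (n + 1)] fun ω => exp (A (n + 1) ω) :=
    fun n => continuous_exp.comp_stronglyMeasurable (hA n)
  have hexpB_meas : ∀ n, StronglyMeasurable[ℱ n] fun ω => exp (-B (n + 1) ω) :=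
    fun n => continuous_exp.comp_stronglyMeasurable (hB n).neg
  have hexpA_bdd : ∀ n, ∃ C, ∀ᵐ ω ∂μ, ‖exp (A (n + 1) ω)‖ ≤ C := fun n => by
    obtain ⟨C, hC⟩ := hA_le n
    exact ⟨exp C, by filter_upwards [hC] with ω hω; simpa using hω⟩
  have hexpB_bdd : ∀ n, ∃ C, ∀ᵐ ω ∂μ, ‖exp (-B (n + 1) ω)‖ ≤ C := fun n => by
    obtain ⟨C, hC⟩ := hB_ge n
    exact ⟨exp (-C), by filter_upwards [hC] with ω hω; simpa using hω⟩
  have hM_meas : ∀ n, StronglyMeasurable[ℱ n] (M n) := by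
    intro n
    induction n with
    | zero => rw [hM_zero]; exact stronglyMeasurable_const
    | succ n ih =>
      rw [hM_succ]
      exact ((ih.mul (hexpB_meas n)).mono (ℱ.mono n.le_succ)).mul (hexpA_meas n)
  have hM_int : ∀ n, Integrable (M n) μ := by
    intro n
    induction n with
    | zero => rw [hM_zero]; exact integrable_const 1
    | succ n ih =>
      obtain ⟨CA, hCA⟩ := hexpA_bdd n
      obtain ⟨CB, hCB⟩ := hexpB_bdd n
      rw [hM_succ]
      exact (ih.mul_bdd ((hexpB_meas n).mono (ℱ.le n)).aestronglyMeasurable hCB).mul_bdd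
        ((hexpA_meas n).mono (ℱ.le _)).aestronglyMeasurable hCA
  refine supermartingale_nat hM_meas hM_int fun n => ?_
  obtain ⟨CA, hCA⟩ := hexpA_bdd n
  have hexpA_int : Integrable (fun ω => exp (A (n + 1) ω)) μ :=
    (integrable_const CA).mono' ((hexpA_meas n).mono (ℱ.le _)).aestronglyMeasurable hCA
  have hpull := condExp_mul_of_stronglyMeasurable_left ((hM_meas n).mul (hexpB_meas n))
    (hM_succ n ▸ hM_int (n + 1)) hexpA_int
  rw [hM_succ]
  filter_upwards [hpull, hAB n] with ω hω hωAB
  rw [hω, Pi.mul_apply, Pi.mul_apply]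
  calc M n ω * exp (-B (n + 1) ω) * μ[fun ω => exp (A (n + 1) ω) | ℱ n] ω
      ≤ M n ω * exp (-B (n + 1) ω) * exp (B (n + 1) ω) := by gcongr
    _ = M n ω := by rw [mul_assoc, ← exp_add, neg_add_cancel, exp_zero, mul_one]

theorem supermartingale_exp_sum_sub_condExp_sub_sq {X Y : ℕ → Ω → ℝ} {b : ℝ} (hb : 0 < b)
    (hX_meas : ∀ i, StronglyMeasurable[ℱ i] (X i)) (hX_bdd : ∀ i, ∀ᵐ ω ∂μ, |X i ω| ≤ b)
    (hX_int : ∀ i, Integrable (X i) μ)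
    (hY_meas : ∀ i, 1 ≤ i → StronglyMeasurable[ℱ (i - 1)] (Y i))
    (hY : ∀ i, 1 ≤ i → Y i =ᵐ[μ] μ[X i | ℱ (i - 1)]) {l : ℝ} (hl0 : 0 < l) (hl1 : l < 1) :
    Supermartingale (fun n ω => exp (∑ i ∈ Finset.Icc 1 n,
      (l / b * (X i ω - Y i ω) - (-log (1 - l) - l) / b ^ 2 * X i ω ^ 2))) ℱ μ := by
  have hψ : 0 ≤ -log (1 - l) - l := by
    linarith [log_le_sub_one_of_pos (show 0 < 1 - l by linarith)]
  have hsuper := supermartingale_exp_sum_sub (μ := μ) (ℱ := ℱ)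
    (A := fun i ω => l / b * X i ω - (-log (1 - l) - l) / b ^ 2 * X i ω ^ 2)
    (B := fun i ω => l / b * Y i ω) (fun n => ?_) (fun n => ?_) (fun n => ?_) (fun n => ?_)
    (fun n => ?_)
  · convert hsuper using 5 with n ω i
    ring
  · exact ((hX_meas _).const_mul _).sub (((hX_meas _).pow 2).const_mul _)
  · exact (hY_meas (n + 1) n.succ_pos).const_mul _
  · refine ⟨l, ?_⟩
    filter_upwards [hX_bdd (n + 1)] with ω hω
    have hlin : l / b * X (n + 1) ω ≤ l :=
      calc l / b * X (n + 1) ω ≤ l / b * b := by gcongr; exact (abs_le.1 hω).2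
        _ = l := div_mul_cancel₀ l hb.ne'
    have hsq : 0 ≤ (-log (1 - l) - l) / b ^ 2 * X (n + 1) ω ^ 2 := by positivity
    linarith
  · refine ⟨-l, ?_⟩
    filter_upwards [hY (n + 1) n.succ_pos,
      ae_bdd_abs_condExp_of_ae_bdd_abs (m := ℱ n) (hX_bdd (n + 1))] with ω hω hω_bdd
    rw [Nat.add_sub_cancel] at hω
    have hY_ge : -b ≤ Y (n + 1) ω := by rw [hω]; exact (abs_le.1 hω_bdd).1
    calc -l = l / b * -b := by field_simp
      _ ≤ l / b * Y (n + 1) ω := by gcongr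
  · have h := condExp_exp_mul_sub_mul_sq_le (ℱ.le n) (hX_int (n + 1)) hb
      (by filter_upwards [hX_bdd (n + 1)] with ω hω using (abs_le.1 hω).1) hl0 hl1
    filter_upwards [h, hY (n + 1) n.succ_pos] with ω hω hYω
    rw [Nat.add_sub_cancel] at hYω
    rwa [hYω]

variable {f : ℕ → Ω → ℝ} {c : ℝ}

theorem Supermartingale.maximal_ineq_of_nonneg (hf : Supermartingale f ℱ μ) (hf_nonneg : 0 ≤ f)
    (hc : 0 < c) (n : ℕ) :
    μ {ω | ∃ k ≤ n, c ≤ f k ω} ≤ ENNReal.ofReal (μ[f 0] / c) := by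
  set τ : Ω → WithTop ℕ := fun ω => (hittingBtwn f (Ici c) 0 n ω : ℕ)
  have hτ : IsStoppingTime ℱ τ :=
    hf.stronglyAdapted.adapted.isStoppingTime_hittingBtwn measurableSet_Ici
  have hτ_le : ∀ ω, τ ω ≤ n := fun ω => WithTop.coe_le_coe.2 (hittingBtwn_le ω)
  have hsub : {ω | ∃ k ≤ n, c ≤ f k ω} ⊆ {ω | c ≤ stoppedValue f τ ω} :=
    fun ω ⟨k, hk, hck⟩ => stoppedValue_hittingBtwn_mem ⟨k, ⟨Nat.zero_le _, hk⟩, hck⟩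
  have hmarkov := mul_meas_ge_le_integral_of_nonneg (Eventually.of_forall fun ω => hf_nonneg _ ω)
    (integrable_stoppedValue ℕ hτ hf.integrable hτ_le) c
  have hstop : μ[stoppedValue f τ] ≤ μ[f 0] := by
    have := hf.neg.expected_stoppedValue_mono (isStoppingTime_const ℱ 0) hτ
      (fun ω => WithTop.coe_le_coe.2 (Nat.zero_le _)) hτ_le
    simpa [stoppedValue, integral_neg] using this
  refine (measure_mono hsub).trans ?_
  rw [ENNReal.le_ofReal_iff_toReal_le (measure_ne_top _ _)
    (div_nonneg (integral_nonneg (hf_nonneg 0)) hc.le), le_div_iff₀ hc, mul_comm]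
  exact hmarkov.trans hstop

theorem Supermartingale.ville_ineq (hf : Supermartingale f ℱ μ) (hf_nonneg : 0 ≤ f) (hc : 0 < c) :
    μ {ω | ∃ n, c ≤ f n ω} ≤ ENNReal.ofReal (μ[f 0] / c) := by
  have hunion : {ω | ∃ n, c ≤ f n ω} = ⋃ n, {ω | ∃ k ≤ n, c ≤ f k ω} := by
    ext ω
    simp only [Set.mem_ofPred_eq, Set.mem_iUnion]
    exact ⟨fun ⟨n, hn⟩ => ⟨n, n, le_rfl, hn⟩, fun ⟨_, k, _, hk⟩ => ⟨k, hk⟩⟩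
  have hmono : Monotone fun n => {ω | ∃ k ≤ n, c ≤ f k ω} :=
    fun _ _ hnm _ ⟨k, hk, hck⟩ => ⟨k, hk.trans hnm, hck⟩
  rw [hunion, hmono.measure_iUnion]
  exact iSup_le (hf.maximal_ineq_of_nonneg hf_nonneg hc)

end MeasureTheory

/-- **one-sided exact design-based bound.** If `|τ̂_i| ≤ m` a.s.,
`m > 0`, `τ_i := E(τ̂_i | F_{i-1})` and `S_n := Σ_{i=1}^n τ̂_i²`, then for any
`α̃ ∈ (0,1)`,
`P(∃ n ≥ 1 : Σ_{i=1}^n (τ̂_i − τ_i) ≥ m(m+1)·log(1/α̃)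
  + S_n·(((m+1)/m)·log(1 + 1/m) − 1/m)) ≤ α̃`. -/
theorem one_sided_exact_design_based_bound
    {Ω : Type*} {m0 : MeasurableSpace Ω} {μ : Measure Ω} [IsProbabilityMeasure μ]
    (ℱ : Filtration ℕ m0)
    (τhat τ : ℕ → Ω → ℝ) (m : ℝ) (hm : 0 < m)
    -- `(τ̂_i)` is `(F_i)`-adapted and a.s. bounded by `m`
    (hadapted : ∀ i, StronglyMeasurable[ℱ i] (τhat i))
    (hbdd : ∀ i, ∀ᵐ ω ∂μ, |τhat i ω| ≤ m)
    (hint : ∀ i, Integrable (τhat i) μ)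
    -- `τ_i = E(τ̂_i | F_{i-1})`
    (hτmeas : ∀ i, 1 ≤ i → StronglyMeasurable[ℱ (i - 1)] (τ i))
    (hτ : ∀ i, 1 ≤ i → τ i =ᵐ[μ] μ[τhat i | ℱ (i - 1)])
    (α : ℝ) (hα : α ∈ Set.Ioo (0 : ℝ) 1) :
    μ {ω | ∃ n : ℕ, 1 ≤ n ∧
        m * (m + 1) * Real.log (1 / α) +
          (∑ i ∈ Finset.Icc 1 n, (τhat i ω) ^ 2) *
            ((m + 1) / m * Real.log (1 + 1 / m) - 1 / m)
        ≤ ∑ i ∈ Finset.Icc 1 n, (τhat i ω - τ i ω)} ≤ ENNReal.ofReal α := by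
  have hM := supermartingale_exp_sum_sub_condExp_sub_sq hm hadapted hbdd hint hτmeas hτ
    (l := 1 / (m + 1)) (by positivity) (by rw [div_lt_one (by linarith)]; linarith)
  refine (measure_mono ?_).trans
    ((hM.ville_ineq (fun _ _ => (exp_pos _).le) (one_div_pos.2 hα.1)).trans (by simp))
  rintro ω ⟨n, -, h⟩
  refine ⟨n, ?_⟩
  rw [Finset.sum_sub_distrib, ← Finset.mul_sum, ← Finset.mul_sum, ← exp_log (one_div_pos.2 hα.1)]
  exact exp_le_exp.2 (le_of_design_threshold_le hm h)
end

section
/- Gaussian confidence sequence: let (Z_j)_{j≥1} be independent standard Gaussian random variables, (σ_j)_{j≥1} real constants, and set S_t = Σ_{j=1}^t σ_j². Then for any η > 0 and α ∈ (0,1), P( for all t ≥ 1, | Σ_{j=1}^t σ_j Z_j | < √( ((S_t η² + 1)/η²) · log( (S_t η² + 1)/α² ) ) ) ≥ 1 − α. -/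
/-!
Write `X_t = ∑_{j ≤ t} σ_j Z_j` and `v_t = S_t + η⁻²`. Mixing the exponential martingales
`exp(λ X_t - λ² S_t / 2)` over `λ ~ N(0, η²)` gives `M_t / η`, where
`M_t = exp(X_t² / (2 v_t)) / √v_t` is therefore a nonnegative martingale with `M_0 = η`.
Its martingale property is checked directly on the closed form: given `Z_1, …, Z_t`, averaging
over the independent `Z_{t+1}` is a Gaussian integral that returns `M_t`.
By Ville's inequality `M` ever reaches `η / α` with probability at most `α`, and
`M_t < η / α` is exactly the bound `|X_t| < √(v_t log(η² v_t / α²))` of the theorem.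
-/

open MeasureTheory ProbabilityTheory Function Finset Real
open scoped ENNReal NNReal

noncomputable def gaussMixture (v x : ℝ) : ℝ := exp (x ^ 2 / (2 * v)) / √v

lemma gaussMixture_pos {v : ℝ} (hv : 0 < v) (x : ℝ) : 0 < gaussMixture v x := by
  unfold gaussMixture; positivity

@[fun_prop]
lemma measurable_gaussMixture (v : ℝ) : Measurable (gaussMixture v) := by
  unfold gaussMixture; fun_prop

-- Completing the square in `z`.
lemma gaussianPDFReal_mul_gaussMixture {v : ℝ} (hv : 0 < v) (s x z : ℝ) :
    gaussianPDFReal 0 1 z * gaussMixture (v + s ^ 2) (x + s * z) =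
      gaussMixture v x * gaussianPDFReal (s * x / v) ((v + s ^ 2) / v).toNNReal z := by
  have hvs : 0 < v + s ^ 2 := by positivity
  have h1 : 0 < √v := sqrt_pos.2 hv
  have h2 : 0 < √(v + s ^ 2) := sqrt_pos.2 hvs
  have h3 : 0 < √(2 * π) := sqrt_pos.2 (by positivity)
  have hsqrt : √(2 * π * ((v + s ^ 2) / v)) = √(2 * π) * √(v + s ^ 2) / √v := by
    rw [mul_div_assoc', sqrt_div' _ hv.le, sqrt_mul (by positivity)]
  have hexp : exp (-z ^ 2 / 2) * exp ((x + s * z) ^ 2 / (2 * (v + s ^ 2))) =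
      exp (x ^ 2 / (2 * v)) * exp (-(z - s * x / v) ^ 2 / (2 * ((v + s ^ 2) / v))) := by
    rw [← exp_add, ← exp_add]; congr 1; field_simp; ring
  simp only [gaussianPDFReal, gaussMixture, NNReal.coe_one, sub_zero, mul_one,
    Real.coe_toNNReal _ (by positivity : 0 ≤ (v + s ^ 2) / v), hsqrt]
  calc _ = (√(2 * π))⁻¹ * (√(v + s ^ 2))⁻¹ *
        (exp (-z ^ 2 / 2) * exp ((x + s * z) ^ 2 / (2 * (v + s ^ 2)))) := by ring
    _ = _ := by rw [hexp]; field_simp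

lemma lintegral_gaussMixture {v : ℝ} (hv : 0 < v) (s x : ℝ) :
    ∫⁻ z, ENNReal.ofReal (gaussMixture (v + s ^ 2) (x + s * z)) ∂gaussianReal 0 1 =
      ENNReal.ofReal (gaussMixture v x) := by
  have hvar : ((v + s ^ 2) / v).toNNReal ≠ 0 := by
    rw [ne_eq, Real.toNNReal_eq_zero, not_le]; positivity
  rw [gaussianReal_of_var_ne_zero 0 one_ne_zero,
    lintegral_withDensity_eq_lintegral_mul _ (measurable_gaussianPDF 0 1) (by fun_prop)]
  simp_rw [Pi.mul_apply, gaussianPDF, ← ENNReal.ofReal_mul (gaussianPDFReal_nonneg _ _ _),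
    gaussianPDFReal_mul_gaussMixture hv, ENNReal.ofReal_mul (gaussMixture_pos hv x).le]
  rw [lintegral_const_mul _ (by fun_prop), ← gaussianPDF_def, lintegral_gaussianPDF_eq_one _ hvar,
    mul_one]

lemma le_gaussMixture_of_sqrt_le {v c x : ℝ} (hv : 0 < v) (hc : 0 < c)
    (hx : √(v * log (c ^ 2 * v)) ≤ |x|) : c ≤ gaussMixture v x := by
  have hlog : log (c ^ 2 * v) ≤ x ^ 2 / v := by
    rcases le_or_gt (log (c ^ 2 * v)) 0 with hneg | hpos
    · exact hneg.trans (by positivity)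
    · rw [le_div_iff₀ hv, ← sq_abs x, mul_comm]
      calc v * log (c ^ 2 * v) = √(v * log (c ^ 2 * v)) ^ 2 := (sq_sqrt (by positivity)).symm
        _ ≤ |x| ^ 2 := by gcongr
  have hsqrt : c * √v = √(c ^ 2 * v) := by rw [sqrt_mul' _ hv.le, sqrt_sq hc.le]
  rw [gaussMixture, le_div_iff₀ (sqrt_pos.2 hv), hsqrt,
    ← log_le_iff_le_exp (sqrt_pos.2 (by positivity)), log_sqrt (by positivity)]
  calc log (c ^ 2 * v) / 2 ≤ x ^ 2 / v / 2 := by gcongr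
    _ = x ^ 2 / (2 * v) := by ring

section Freezing

variable {Ω E β : Type*} [MeasurableSpace E] [mβ : MeasurableSpace β]
  {Y : Ω → E} {W : Ω → β} {f : E → β → ℝ≥0∞}

lemma IndepFun.lintegral_comp_eq_lintegral_lintegral {m0 : MeasurableSpace Ω} {μ : Measure Ω}
    [IsFiniteMeasure μ] (hYW : IndepFun Y W μ) (hY : Measurable Y)
    (hW : Measurable W) (hf : Measurable (uncurry f)) :
    ∫⁻ ω, f (Y ω) (W ω) ∂μ = ∫⁻ ω, ∫⁻ z, f (Y ω) z ∂(μ.map W) ∂μ := calc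
  _ = ∫⁻ p, uncurry f p ∂(μ.map fun ω ↦ (Y ω, W ω)) := (lintegral_map hf (hY.prodMk hW)).symm
  _ = ∫⁻ p, uncurry f p ∂((μ.map Y).prod (μ.map W)) := by
    rw [(indepFun_iff_map_prod_eq_prod_map_map hY.aemeasurable hW.aemeasurable).1 hYW]
  _ = ∫⁻ y, ∫⁻ z, f y z ∂(μ.map W) ∂(μ.map Y) := lintegral_prod _ hf.aemeasurable
  _ = _ := lintegral_map hf.lintegral_prod_right' hY

lemma setLIntegral_comp_eq_setLIntegral_lintegral_of_indep {F m0 : MeasurableSpace Ω}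
    {μ : Measure Ω} [IsFiniteMeasure μ] (hF : F ≤ m0)
    (hind : Indep F (mβ.comap W) μ) (hY : Measurable[F] Y) (hW : Measurable W)
    (hf : Measurable (uncurry f)) {s : Set Ω} (hs : MeasurableSet[F] s) :
    ∫⁻ ω in s, f (Y ω) (W ω) ∂μ = ∫⁻ ω in s, ∫⁻ z, f (Y ω) z ∂(μ.map W) ∂μ := by
  -- freeze the pair `(1_s, Y)` instead of `Y`
  have hI : Measurable[F] (s.indicator (1 : Ω → ℝ≥0∞)) := Measurable.indicator (by fun_prop) hs
  have hIY : Measurable[F] fun ω ↦ (s.indicator (1 : Ω → ℝ≥0∞) ω, Y ω) := hI.prodMk hY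
  have key := IndepFun.lintegral_comp_eq_lintegral_lintegral
    (indep_of_indep_of_le_left hind (measurable_iff_comap_le.mp hIY)) (hIY.mono hF le_rfl) hW
    (f := fun p z ↦ p.1 * f p.2 z) (by fun_prop)
  rw [← lintegral_indicator (hF s hs), ← lintegral_indicator (hF s hs)]
  convert key using 2 <;> ext ω <;> by_cases hω : ω ∈ s <;> simp [hω]

end Freezing

section Ville

variable {Ω : Type*} {m0 : MeasurableSpace Ω} {μ : Measure Ω} [IsFiniteMeasure μ]
  {ℱ : Filtration ℕ m0} {f : ℕ → Ω → ℝ}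

lemma martingale_of_setLIntegral_eq_succ (hadp : StronglyAdapted ℱ f) (hnonneg : 0 ≤ f)
    (h0 : ∫⁻ ω, ENNReal.ofReal (f 0 ω) ∂μ ≠ ∞)
    (hf : ∀ i, ∀ s : Set Ω, MeasurableSet[ℱ i] s →
      ∫⁻ ω in s, ENNReal.ofReal (f (i + 1) ω) ∂μ = ∫⁻ ω in s, ENNReal.ofReal (f i ω) ∂μ) :
    Martingale f ℱ μ := by
  have hlint : ∀ i, ∫⁻ ω, ENNReal.ofReal (f i ω) ∂μ = ∫⁻ ω, ENNReal.ofReal (f 0 ω) ∂μ := by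
    intro i
    induction i with
    | zero => rfl
    | succ i ih => simpa [ih] using hf i Set.univ MeasurableSet.univ
  have hint : ∀ i, Integrable (f i) μ := fun i ↦
    ⟨((hadp i).mono (ℱ.le i)).aestronglyMeasurable,
      (hasFiniteIntegral_iff_ofReal (ae_of_all _ (hnonneg i))).2 ((hlint i).symm ▸ h0.lt_top)⟩
  refine martingale_of_setIntegral_eq_succ hadp hint fun i s hs ↦ ?_
  rw [integral_eq_lintegral_of_nonneg_ae (ae_of_all _ (hnonneg i)),
    integral_eq_lintegral_of_nonneg_ae (ae_of_all _ (hnonneg (i + 1))), hf i s hs]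
  all_goals exact (hint _).1.restrict

-- Ville's inequality, from Doob's maximal inequality on each finite horizon.
lemma Martingale.measure_exists_le_le (hf : Martingale f ℱ μ) (hnonneg : 0 ≤ f) {c : ℝ}
    (hc : 0 < c) : μ {ω | ∃ n, c ≤ f n ω} ≤ ENNReal.ofReal (μ[f 0] / c) := by
  lift c to ℝ≥0 using hc.le
  rw [ENNReal.ofReal_div_of_pos hc, ENNReal.ofReal_coe_nnreal,
    ENNReal.le_div_iff_mul_le (.inl (by simpa using hc.ne')) (.inl ENNReal.coe_ne_top), mul_comm]
  set E : ℕ → Set Ω := fun n ↦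
    {ω | (c : ℝ) ≤ (Finset.range (n + 1)).sup' Finset.nonempty_range_add_one fun k ↦ f k ω}
  have hE : Monotone E := by
    intro m n hmn ω hω
    simp only [E, Set.mem_ofPred_eq] at hω ⊢
    exact hω.trans (Finset.sup'_mono _ (Finset.range_subset_range.2 (by omega)) _)
  have hsub : {ω | ∃ n, (c : ℝ) ≤ f n ω} ⊆ ⋃ n, E n := by
    rintro ω ⟨n, hn⟩
    refine Set.mem_iUnion.2 ⟨n, ?_⟩
    simpa only [E, Set.mem_ofPred_eq] using
      Finset.le_sup'_of_le _ (Finset.self_mem_range_succ n) hn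
  grw [hsub, hE.measure_iUnion, ENNReal.mul_iSup]
  refine iSup_le fun n ↦ (maximal_ineq hf.submartingale hnonneg n).trans ?_
  have hconst : μ[f n] = μ[f 0] := by
    simpa using (hf.setIntegral_eq n.zero_le MeasurableSet.univ).symm
  rw [← hconst]
  exact ENNReal.ofReal_le_ofReal
    (setIntegral_le_integral (hf.integrable n) (ae_of_all _ (hnonneg n)))

end Ville

lemma one_sub_le_prob_of_prob_compl_le {Ω : Type*} {m0 : MeasurableSpace Ω} {μ : Measure Ω}
    [IsProbabilityMeasure μ] {s : Set Ω} {p : ℝ≥0∞} (h : μ sᶜ ≤ p) : 1 - p ≤ μ s :=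
  calc 1 - p ≤ μ Set.univ - μ sᶜ := by rw [measure_univ]; gcongr
    _ ≤ μ s := tsub_le_iff_right.2 (measure_univ_le_add_compl s)

noncomputable def mixtureProcess {Ω : Type*} (σ : ℕ → ℝ) (Z : ℕ → Ω → ℝ) (v : ℝ) (t : ℕ)
    (ω : Ω) : ℝ :=
  gaussMixture (v + ∑ j ∈ Icc 1 t, σ j ^ 2) (∑ j ∈ Icc 1 t, σ j * Z j ω)

section Mixture

variable {Ω : Type*} {m0 : MeasurableSpace Ω} {μ : Measure Ω}
  {Z : ℕ → Ω → ℝ} (hZ : ∀ j, Measurable (Z j)) (σ : ℕ → ℝ) (v : ℝ)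

lemma mixtureProcess_succ (t : ℕ) (ω : Ω) :
    mixtureProcess σ Z v (t + 1) ω =
      gaussMixture ((v + ∑ j ∈ Icc 1 t, σ j ^ 2) + σ (t + 1) ^ 2)
        (∑ j ∈ Icc 1 t, σ j * Z j ω + σ (t + 1) * Z (t + 1) ω) := by
  rw [mixtureProcess, sum_Icc_succ_top (by omega), sum_Icc_succ_top (by omega), add_assoc]

lemma measurable_natural_sum_Icc (t : ℕ) :
    Measurable[Filtration.natural Z (fun j ↦ (hZ j).stronglyMeasurable) t]
      fun ω ↦ ∑ j ∈ Icc 1 t, σ j * Z j ω :=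
  Finset.measurable_sum _ fun j hj ↦
    (((Filtration.stronglyAdapted_natural (fun j ↦ (hZ j).stronglyMeasurable) j).mono
      (Filtration.mono _ (mem_Icc.1 hj).2)).measurable).const_mul _

lemma indep_natural_comap_succ (hindep : iIndepFun Z μ) (t : ℕ) :
    Indep (Filtration.natural Z (fun j ↦ (hZ j).stronglyMeasurable) t)
      (MeasurableSpace.comap (Z (t + 1)) inferInstance) μ := by
  have h := indep_iSup_of_disjoint (fun j ↦ (hZ j).comap_le) hindep.iIndep
    (S := Set.Iic t) (T := {t + 1}) (by simp)
  simp only [Set.mem_Iic, Set.mem_singleton_iff, iSup_iSup_eq_left] at h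
  exact h

lemma martingale_mixtureProcess [IsFiniteMeasure μ] (hindep : iIndepFun Z μ)
    (hgauss : ∀ j, μ.map (Z j) = gaussianReal 0 1) (hv : 0 < v) :
    Martingale (mixtureProcess σ Z v)
      (Filtration.natural Z fun j ↦ (hZ j).stronglyMeasurable) μ := by
  have hvS : ∀ t, 0 < v + ∑ j ∈ Icc 1 t, σ j ^ 2 := fun t ↦ by positivity
  refine martingale_of_setLIntegral_eq_succ
    (fun t ↦ ((measurable_gaussMixture _).comp
      (measurable_natural_sum_Icc hZ σ t)).stronglyMeasurable)
    (fun t ω ↦ (gaussMixture_pos (hvS t) _).le) (by simp [mixtureProcess, ENNReal.mul_eq_top])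
    fun t s hs ↦ ?_
  simp_rw [mixtureProcess_succ]
  rw [setLIntegral_comp_eq_setLIntegral_lintegral_of_indep (Filtration.le _ t)
    (indep_natural_comap_succ hZ hindep t) (measurable_natural_sum_Icc hZ σ t) (hZ (t + 1))
    (f := fun x z ↦ ENNReal.ofReal (gaussMixture _ (x + σ (t + 1) * z))) (by fun_prop) hs]
  simp_rw [hgauss, lintegral_gaussMixture (hvS t)]
  rfl

end Mixture

/-- **Gaussian confidence sequence.** For independent standard Gaussians
`(Z_j)_{j≥1}`, real constants `(σ_j)`, `S_t = Σ_{j=1}^t σ_j²`, any `η > 0` and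
`α ∈ (0,1)`:
`P(∀ t ≥ 1, |Σ_{j=1}^t σ_j Z_j| < √(((S_t η² + 1)/η²)·log((S_t η² + 1)/α²))) ≥ 1 − α`. -/
theorem gaussian_confidence_sequence
    {Ω : Type*} {m0 : MeasurableSpace Ω} {μ : Measure Ω} [IsProbabilityMeasure μ]
    (Z : ℕ → Ω → ℝ) (hZmeas : ∀ j, Measurable (Z j))
    (hindep : iIndepFun Z μ)
    (hgauss : ∀ j, μ.map (Z j) = gaussianReal 0 1)
    (σ : ℕ → ℝ) (η α : ℝ) (hη : 0 < η) (hα : α ∈ Set.Ioo (0 : ℝ) 1) :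
    ENNReal.ofReal (1 - α) ≤
      μ {ω | ∀ t : ℕ, 1 ≤ t →
        |∑ j ∈ Finset.Icc 1 t, σ j * Z j ω| <
          Real.sqrt
            (((∑ j ∈ Finset.Icc 1 t, (σ j) ^ 2) * η ^ 2 + 1) / η ^ 2 *
              Real.log (((∑ j ∈ Finset.Icc 1 t, (σ j) ^ 2) * η ^ 2 + 1) / α ^ 2))} := by
  set M := mixtureProcess σ Z (η ^ 2)⁻¹
  have hM0 : μ[M 0] = η := by simp [M, mixtureProcess, gaussMixture, hη.le]
  have hbad : μ {ω | ∃ t, η / α ≤ M t ω} ≤ ENNReal.ofReal α := by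
    have := Martingale.measure_exists_le_le
      (martingale_mixtureProcess hZmeas σ (η ^ 2)⁻¹ hindep hgauss (by positivity))
      (fun t ω ↦ (gaussMixture_pos (by positivity) _).le) (div_pos hη hα.1)
    rwa [hM0, div_div_cancel₀ hη.ne'] at this
  rw [ENNReal.ofReal_sub _ hα.1.le, ENNReal.ofReal_one]
  refine one_sub_le_prob_of_prob_compl_le (le_trans (measure_mono fun ω hω ↦ ?_) hbad)
  simp only [Set.mem_compl_iff, Set.mem_ofPred_eq, not_forall, not_lt] at hω
  obtain ⟨t, -, ht⟩ := hω
  refine ⟨t, le_gaussMixture_of_sqrt_le (by positivity) (div_pos hη hα.1) ?_⟩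
  have hv : (η ^ 2)⁻¹ + ∑ j ∈ Icc 1 t, σ j ^ 2 =
      ((∑ j ∈ Icc 1 t, σ j ^ 2) * η ^ 2 + 1) / η ^ 2 := by
    field_simp; ring
  have hcv : (η / α) ^ 2 * ((η ^ 2)⁻¹ + ∑ j ∈ Icc 1 t, σ j ^ 2) =
      ((∑ j ∈ Icc 1 t, σ j ^ 2) * η ^ 2 + 1) / α ^ 2 := by
    field_simp; ring
  rwa [hcv, hv]
end
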